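/- (Permutation importance in an additive model.) Suppose f is additive, f(x) = Σ_{k=1}^p f_k(x_k), with each f_k measurable and f_k(X_k) square-integrable, and Y = f(X) + ε with ε independent of (X, X'_j), E[ε] = 0, Var(ε) = σ² ∈ (0,∞). Then the permutation importance of X_j equals twice the variance of its additive component: I(X_j) = 2 · Var(f_j(X_j)). -/

import Mathlib

/-!
Resampling `Xⱼ` changes the residual `Y - f` from `ε` to `ε + D` with
`D = fⱼ(Xⱼ) - fⱼ(X'ⱼ)`, because `f` is additive. As `ε` is centred and independent of `D`, the
excess squared error is `E[D²]`, and since `fⱼ(Xⱼ)` and `fⱼ(X'ⱼ)` are i.i.d. this is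
`2 · Var fⱼ(Xⱼ)`.
-/

open MeasureTheory ProbabilityTheory

lemma Finset.sum_apply_update {ι M : Type*} [Fintype ι] [DecidableEq ι] [AddCommGroup M]
    {β : ι → Type*} (g : ∀ k, β k → M) (x : ∀ k, β k) (j : ι) (a : β j) :
    ∑ k, g k (Function.update x j a k) = ∑ k, g k (x k) - g j (x j) + g j a := by
  simp only [Function.apply_update g, Finset.sum_update_of_mem (Finset.mem_univ j),
    ← Finset.add_sum_erase _ _ (Finset.mem_univ j), Finset.sdiff_singleton_eq_erase]
  abel

namespace ProbabilityTheory

variable {Ω : Type*} [MeasurableSpace Ω] {μ : Measure Ω} [IsProbabilityMeasure μ] {X Y : Ω → ℝ}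

lemma IndepFun.integral_add_sq (h : IndepFun X Y μ) (hX : MemLp X 2 μ) (hY : MemLp Y 2 μ) :
    ∫ ω, (X ω + Y ω) ^ 2 ∂μ = ∫ ω, X ω ^ 2 ∂μ + ∫ ω, Y ω ^ 2 ∂μ + 2 * (μ[X] * μ[Y]) := by
  have hvar := h.variance_add hX hY
  rw [variance_eq_sub (hX.add hY), variance_eq_sub hX, variance_eq_sub hY] at hvar
  simp only [Pi.add_apply, Pi.pow_apply] at hvar
  rw [integral_add (hX.integrable one_le_two) (hY.integrable one_le_two)] at hvar
  linarith

lemma IndepFun.integral_sub_sq_eq_two_mul_variance (h : IndepFun X Y μ)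
    (hXY : IdentDistrib X Y μ μ) (hX : MemLp X 2 μ) :
    ∫ ω, (X ω - Y ω) ^ 2 ∂μ = 2 * Var[X; μ] := by
  have hY : MemLp Y 2 μ := hXY.memLp_snd hX
  have hsq : ∫ ω, Y ω ^ 2 ∂μ = ∫ ω, X ω ^ 2 ∂μ :=
    (hXY.comp (measurable_id.pow_const 2)).integral_eq.symm
  have hneg : ∫ ω, -Y ω ∂μ = -∫ ω, X ω ∂μ := by rw [integral_neg, hXY.integral_eq]
  have h_neg : IndepFun X (fun ω => -Y ω) μ := h.comp measurable_id measurable_neg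
  simp only [sub_eq_add_neg]
  rw [h_neg.integral_add_sq hX hY.neg]
  simp only [neg_sq, hsq, hneg, variance_eq_sub hX, Pi.pow_apply]
  ring

end ProbabilityTheory

theorem permutation_importance_additive_general
    {Ω : Type*} [MeasurableSpace Ω] (P : Measure Ω) [IsProbabilityMeasure P]
    {p : ℕ} (j : Fin p) (X : Ω → (Fin p → ℝ)) (X' : Ω → ℝ) (ε : Ω → ℝ) (Y : Ω → ℝ)
    (f : (Fin p → ℝ) → ℝ) (fk : Fin p → ℝ → ℝ) (σ2 : ℝ)
    (hε : Measurable ε)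
    (hfk : ∀ k, Measurable (fk k))
    (hadd : ∀ x : Fin p → ℝ, f x = ∑ k, fk k (x k))
    (hL2k : ∀ k, MemLp (fun ω => fk k (X ω k)) 2 P)
    (hident : IdentDistrib X' (fun ω => X ω j) P P)
    (hXindep : IndepFun X' X P)
    (hY : ∀ ω, Y ω = f (X ω) + ε ω)
    (hεindep : IndepFun ε (fun ω => (X ω, X' ω)) P)
    (hεmean : ∫ ω, ε ω ∂P = 0)
    (hεvar : variance ε P = σ2) (hσ2 : 0 < σ2) :
    (∫ ω, (Y ω - f (Function.update (X ω) j (X' ω))) ^ 2 ∂P)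
      - (∫ ω, (Y ω - f (X ω)) ^ 2 ∂P)
      = 2 * variance (fun ω => fk j (X ω j)) P := by
  set g : Ω → ℝ := fun ω => fk j (X ω j)
  set g' : Ω → ℝ := fun ω => fk j (X' ω)
  have hε2 : MemLp ε 2 P :=
    memLp_two_of_variance_ne_zero hε.aestronglyMeasurable (hεvar ▸ hσ2.ne')
  have hg2 : MemLp g 2 P := hL2k j
  have hgg' : IdentDistrib g g' P P := (hident.comp (hfk j)).symm
  have h_indep_gg' : IndepFun g g' P :=
    hXindep.symm.comp ((hfk j).comp (measurable_pi_apply j)) (hfk j)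
  have h_indep_εD : IndepFun ε (fun ω => g ω - g' ω) P :=
    hεindep.comp (ψ := fun q : (Fin p → ℝ) × ℝ => fk j (q.1 j) - fk j q.2) measurable_id
      (by fun_prop)
  have h_perm : ∀ ω, Y ω - f (Function.update (X ω) j (X' ω)) = ε ω + (g ω - g' ω) := by
    intro ω
    rw [hY, hadd, hadd, Finset.sum_apply_update]
    ring
  have h_orig : ∀ ω, Y ω - f (X ω) = ε ω := fun ω => by rw [hY]; ring
  simp only [h_perm, h_orig]
  rw [h_indep_εD.integral_add_sq hε2 (hg2.sub (hgg'.memLp_snd hg2)), hεmean,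
    h_indep_gg'.integral_sub_sq_eq_two_mul_variance hgg' hg2]
  ring

/-- Permutation importance in an additive model: if `f(x) = Σₖ fₖ(xₖ)` then
`I(Xⱼ) = 2 · Var(fⱼ(Xⱼ))`. -/
theorem permutation_importance_additive
    {Ω : Type*} [MeasurableSpace Ω] (P : Measure Ω) [IsProbabilityMeasure P]
    {p : ℕ} (j : Fin p) (X : Ω → (Fin p → ℝ)) (X' : Ω → ℝ) (ε : Ω → ℝ) (Y : Ω → ℝ)
    (f : (Fin p → ℝ) → ℝ) (fk : Fin p → ℝ → ℝ) (σ2 : ℝ)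
    (hX : Measurable X) (hX' : Measurable X') (hε : Measurable ε) (hf : Measurable f)
    (hfk : ∀ k, Measurable (fk k))
    (hadd : ∀ x : Fin p → ℝ, f x = ∑ k, fk k (x k))
    (hL2k : ∀ k, MemLp (fun ω => fk k (X ω k)) 2 P)
    (hident : IdentDistrib X' (fun ω => X ω j) P P)
    (hXindep : IndepFun X' X P)
    (hY : ∀ ω, Y ω = f (X ω) + ε ω)
    (hεindep : IndepFun ε (fun ω => (X ω, X' ω)) P)
    (hεmean : ∫ ω, ε ω ∂P = 0)
    (hεvar : variance ε P = σ2) (hσ2 : 0 < σ2) :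
    (∫ ω, (Y ω - f (Function.update (X ω) j (X' ω))) ^ 2 ∂P)
      - (∫ ω, (Y ω - f (X ω)) ^ 2 ∂P)
      = 2 * variance (fun ω => fk j (X ω j)) P :=
  permutation_importance_additive_general P j X X' ε Y f fk σ2 hε hfk hadd hL2k hident hXindep hY
    hεindep hεmean hεvar hσ2
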